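/- Given b ≥ 2 and k ≥ 1, if there exists a k-oasis base b, then there exists a k-mirage base b; that is, there exist k consecutive integers d_1,...,d_k and non-negative integers r_1,...,r_k each less than b³ with d_i = r_i − S_{[0,b]}(r_i) for all i. -/

import Mathlib

/-! A fixed point `a` of `S_{[c,b]}` is exactly a solution of `D(a) = c`, where
`D(a) = a - S_{[0,b]}(a)`. Writing `a = s + b³t` with `s < b³`, the defect splits as
`D(a) = D(s) + (b³t - S_{[0,b]}(t))`. On three-digit numbers `D` ranges over an interval of
length `b³ - 2b + 1`, while the second summand grows by at least `b³ - 2b + 3` each time `t`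
increases, since `t ↦ t + 1` raises `S_{[0,b]}(t)` by at most `2b - 3`. So consecutive values of
the defect share the same `t`, and subtracting the common second summand turns a `k`-oasis into
a `k`-mirage of three-digit numbers. -/

/-- The augmented generalized happy function: `c` plus the sum of squares of the base-`b`
digits of `a` (with the convention that it maps `0` to `c`). -/
def S (c b a : ℕ) : ℕ := c + ((Nat.digits b a).map (· ^ 2)).sum

def defect (b n : ℕ) : ℤ := n - S 0 b n

theorem S_eq_add_S_zero (c b a : ℕ) : S c b a = c + S 0 b a := by
  simp [S]

theorem S_eq_self_iff {c b a : ℕ} : S c b a = a ↔ defect b a = c := by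
  rw [defect, S_eq_add_S_zero]
  omega

section

variable {b : ℕ}

@[simp]
theorem S_zero_zero : S 0 b 0 = 0 := by
  simp [S]

theorem S_zero_of_lt {r : ℕ} (hr : r < b) : S 0 b r = r ^ 2 := by
  rcases r.eq_zero_or_pos with rfl | hr0
  · simp
  · simp [S, Nat.digits_of_lt b r hr0.ne' hr]

theorem S_zero_add_pow_mul (hb : 1 < b) {n s : ℕ} (hs : s < b ^ n) (t : ℕ) :
    S 0 b (s + b ^ n * t) = S 0 b s + S 0 b t := by
  rcases t.eq_zero_or_pos with rfl | ht
  · simp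
  obtain ⟨k, hk⟩ := Nat.exists_eq_add_of_le ((Nat.digits_length_le_iff hb s).2 hs)
  rw [S, hk, ← Nat.digits_append_zeroes_append_digits hb ht]
  simp [S]

theorem S_zero_add_mul (hb : 1 < b) {r : ℕ} (hr : r < b) (q : ℕ) :
    S 0 b (r + b * q) = r ^ 2 + S 0 b q := by
  rw [← S_zero_of_lt hr, ← S_zero_add_pow_mul hb (n := 1) (by simpa), pow_one]

theorem S_zero_succ_add_three_le (hb : 1 < b) (n : ℕ) :
    S 0 b (n + 1) + 3 ≤ S 0 b n + 2 * b := by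
  induction n using Nat.strong_induction_on with
  | _ n ih =>
  have hr : n % b < b := Nat.mod_lt n (by omega)
  rw [← Nat.mod_add_div n b, S_zero_add_mul hb hr]
  by_cases hcarry : n % b + 1 < b
  · rw [add_right_comm, S_zero_add_mul hb hcarry]
    nlinarith
  · have hq : n / b < n := Nat.div_lt_self (by have := Nat.mod_le n b; omega) hb
    have hsucc : n % b + b * (n / b) + 1 = 0 + b * (n / b + 1) := by
      rw [mul_add, mul_one]; omega
    rw [hsucc, S_zero_add_mul hb (by omega)]
    nlinarith [ih _ hq]

theorem mul_sub_S_zero_add_le (hb : 1 < b) {m t t' : ℕ} (hm : 2 * b ≤ m + 3) (h : t < t') :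
    (m * t - S 0 b t : ℤ) + m + 3 ≤ m * t' - S 0 b t' + 2 * b := by
  have hstep (u : ℕ) : (S 0 b (u + 1) : ℤ) + 3 ≤ S 0 b u + 2 * b := by
    exact_mod_cast S_zero_succ_add_three_le hb u
  induction t', h using Nat.le_induction with
  | base => push_cast; linarith [hstep t]
  | succ u _ ih =>
    have hm' : (2 * b : ℤ) ≤ m + 3 := by exact_mod_cast hm
    push_cast
    nlinarith [hstep u]

theorem defect_add_pow_mul (hb : 1 < b) {n s : ℕ} (hs : s < b ^ n) (t : ℕ) :
    defect b (s + b ^ n * t) = defect b s + ((b : ℤ) ^ n * t - S 0 b t) := by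
  rw [defect, defect, S_zero_add_pow_mul hb hs]
  push_cast
  ring

theorem defect_of_lt_pow_three (hb : 1 < b) {s : ℕ} (hs : s < b ^ 3) :
    ∃ a₀ a₁ a₂ : ℕ, a₀ < b ∧ a₁ < b ∧ a₂ < b ∧
      defect b s = (a₀ - a₀ ^ 2 : ℤ) + a₁ * (b - a₁) + a₂ * (b ^ 2 - a₂) := by
  have hb0 : 0 < b := by omega
  have hq : s / b / b < b := by
    rw [Nat.div_div_eq_div_mul, Nat.div_lt_iff_lt_mul (by positivity)]
    convert hs using 1
    ring
  obtain ⟨a₀, a₁, a₂, h₀, h₁, h₂, rfl⟩ :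
      ∃ a₀ a₁ a₂, a₀ < b ∧ a₁ < b ∧ a₂ < b ∧ s = a₀ + b * (a₁ + b * a₂) :=
    ⟨s % b, s / b % b, s / b / b, Nat.mod_lt _ hb0, Nat.mod_lt _ hb0, hq,
      by rw [Nat.mod_add_div, Nat.mod_add_div]⟩
  refine ⟨a₀, a₁, a₂, h₀, h₁, h₂, ?_⟩
  rw [defect, S_zero_add_mul hb h₀, S_zero_add_mul hb h₁, S_zero_of_lt h₂]
  push_cast
  ring

theorem neg_le_defect_of_lt_pow_three (hb : 1 < b) {s : ℕ} (hs : s < b ^ 3) :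
    -((b - 1) * (b - 2) : ℤ) ≤ defect b s := by
  obtain ⟨a₀, a₁, a₂, h₀, h₁, h₂, hs⟩ := defect_of_lt_pow_three hb hs
  rw [hs]
  have h₀' : (a₀ : ℤ) < b := by exact_mod_cast h₀
  have h₁' : (a₁ : ℤ) < b := by exact_mod_cast h₁
  have h₂' : (a₂ : ℤ) < b := by exact_mod_cast h₂
  have hb' : (1 : ℤ) < b := by exact_mod_cast hb
  have hb₂ : (b : ℤ) ≤ b ^ 2 := by nlinarith
  nlinarith [mul_nonneg (sub_nonneg.2 (Int.le_sub_one_of_lt h₀'))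
      (by linarith : (0 : ℤ) ≤ a₀ + b - 2),
    mul_nonneg (a₁.cast_nonneg (α := ℤ)) (sub_nonneg.2 h₁'.le),
    mul_nonneg (a₂.cast_nonneg (α := ℤ)) (by linarith : (0 : ℤ) ≤ b ^ 2 - a₂)]

theorem defect_le_of_lt_pow_three (hb : 1 < b) {s : ℕ} (hs : s < b ^ 3) :
    defect b s ≤ (b - 1) * (b ^ 2 + 1) := by
  obtain ⟨a₀, a₁, a₂, h₀, h₁, h₂, hs⟩ := defect_of_lt_pow_three hb hs
  rw [hs]
  have h₁' : (a₁ : ℤ) < b := by exact_mod_cast h₁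
  have h₂' : (a₂ : ℤ) < b := by exact_mod_cast h₂
  have hb' : (1 : ℤ) < b := by exact_mod_cast hb
  have hb₂ : (b : ℤ) ≤ b ^ 2 := by nlinarith
  nlinarith [mul_nonneg (sub_nonneg.2 (Int.le_sub_one_of_lt h₂'))
      (by nlinarith : (0 : ℤ) ≤ b ^ 2 - b + 1 - a₂),
    mul_nonneg (a₁.cast_nonneg (α := ℤ)) (sub_nonneg.2 (Int.le_sub_one_of_lt h₁')),
    Int.le_self_sq (a₀ : ℤ)]

theorem div_pow_three_eq_of_defect_eq_add_one (hb : 1 < b) {a a' : ℕ}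
    (h : defect b a' = defect b a + 1) : a' / b ^ 3 = a / b ^ 3 := by
  have hb3 : 0 < b ^ 3 := by positivity
  rw [← Nat.mod_add_div a (b ^ 3), ← Nat.mod_add_div a' (b ^ 3),
    defect_add_pow_mul hb (Nat.mod_lt a hb3), defect_add_pow_mul hb (Nat.mod_lt a' hb3)] at h
  have hlo := neg_le_defect_of_lt_pow_three hb (Nat.mod_lt a hb3)
  have hlo' := neg_le_defect_of_lt_pow_three hb (Nat.mod_lt a' hb3)
  have hup := defect_le_of_lt_pow_three hb (Nat.mod_lt a hb3)
  have hup' := defect_le_of_lt_pow_three hb (Nat.mod_lt a' hb3)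
  have hm : 2 * b ≤ b ^ 3 + 3 := by nlinarith [Nat.pow_le_pow_left hb.le 2]
  by_contra hne
  rcases Nat.lt_or_gt_of_ne hne with hlt | hlt <;>
  · have := mul_sub_S_zero_add_le hb hm hlt
    rw [Nat.cast_pow] at this
    linarith

end

theorem stmt_18_general (b k : ℕ) (hb : 2 ≤ b)
    (h : ∃ c : ℕ, ∀ j, 1 ≤ j → j ≤ k → ∃ a : ℕ, 0 < a ∧ S (c + j) b a = a) :
    ∃ (d : ℤ) (r : Fin k → ℕ), (∀ i, r i < b ^ 3) ∧
      ∀ i : Fin k, (r i : ℤ) - (S 0 b (r i) : ℤ) = d + i := by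
  obtain ⟨c, hc⟩ := h
  obtain _ | n := k
  · exact ⟨0, Fin.elim0, fun i => i.elim0, fun i => i.elim0⟩
  have hfix (i : Fin (n + 1)) : ∃ a, defect b a = c + 1 + i := by
    obtain ⟨a, -, ha⟩ := hc (i + 1) (by omega) (by omega)
    exact ⟨a, by rw [S_eq_self_iff.1 ha]; push_cast; ring⟩
  choose a ha using hfix
  have hlevel : ∀ i, a i / b ^ 3 = a 0 / b ^ 3 :=
    Fin.induction rfl fun i ih => Eq.trans (div_pow_three_eq_of_defect_eq_add_one hb
      (by simp only [ha, Fin.val_succ, Fin.val_castSucc]; push_cast; ring)) ih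
  have hb3 : 0 < b ^ 3 := by positivity
  refine ⟨c + 1 - ((b : ℤ) ^ 3 * (a 0 / b ^ 3 : ℕ) - S 0 b (a 0 / b ^ 3)),
    fun i => a i % b ^ 3, fun i => Nat.mod_lt _ hb3, fun i => ?_⟩
  have hsplit := defect_add_pow_mul hb (Nat.mod_lt (a i) hb3) (a i / b ^ 3)
  rw [Nat.mod_add_div, ha, hlevel] at hsplit
  rw [← defect]
  linarith

theorem stmt_18 (b k : ℕ) (hb : 2 ≤ b) (hk : 1 ≤ k)
    (h : ∃ c : ℕ, ∀ j, 1 ≤ j → j ≤ k → ∃ a : ℕ, 0 < a ∧ S (c + j) b a = a) :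
    ∃ (d : ℤ) (r : Fin k → ℕ), (∀ i, r i < b ^ 3) ∧
      ∀ i : Fin k, (r i : ℤ) - (S 0 b (r i) : ℤ) = d + i :=
  stmt_18_general b k hb h
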